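/- Let d(n) denote the GF(2)-dimension of the kernel of the Lights Out map of the n × n grid graph. If d(n) = 2, then n is odd. -/

import Mathlib

/-!
The grid is the box product of two paths. A vector `x` on `pathGraph m □ H` lies in the kernel
of `Φ` exactly when its rows, padded by a zero row on either side, satisfy
`r (k + 2) = Φ_H (r (k + 1)) + r k`. So `x` is determined by its first row `v` through
`r k = F_k(Φ_H) v`, with `F_k` the Fibonacci polynomials over GF(2), and the padding row
`r (m + 1) = 0` is the single constraint `F_{m+1}(Φ_H) v = 0`. On the path with `n` vertices,
`Φ = 1 + A` where the adjacency operator `A` has the first basis vector as a cyclic vector killed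
by `F_{n+1}`; for a cyclic operator, `dim ker f(A) = deg gcd(f, F_{n+1})`. Hence
`d(n) = deg gcd(F_{n+1}(X + 1), F_{n+1})`.

For `n = 2k`, `F_{2k+1} = F_{k+1}^2 + F_k^2 = Q^2` with `Q = F_{k+1} + F_k`, and a gcd of squares
is the square of the gcd, so `d(n) = 2 deg gcd(Q(X + 1), Q)`. The roots of this gcd are stable
under `a ↦ a + 1`, which has no fixed point in characteristic 2, so its degree is not 1.
-/

/-- The Lights Out map of a finite simple graph `G`:
`Φ_G(x)(v) = x(v) + Σ_{u ~ v} x(u)` over GF(2), as a GF(2)-linear map. -/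
def lightsOut {V : Type*} [Fintype V] (G : SimpleGraph V) [DecidableRel G.Adj] :
    (V → ZMod 2) →ₗ[ZMod 2] (V → ZMod 2) where
  toFun x := fun v => x v + ∑ u ∈ G.neighborFinset v, x u
  map_add' x y := by
    funext v
    simp [Finset.sum_add_distrib]
    ring
  map_smul' c x := by
    funext v
    simp [Finset.mul_sum, mul_add]

/-- The Hamming weight of a GF(2) vector: the number of coordinates equal to 1. -/
def hammingWeight {V : Type*} [Fintype V] (x : V → ZMod 2) : ℕ :=
  (Finset.univ.filter fun v => x v = 1).card

/-- The `n × n` grid graph on `Fin n × Fin n`: two vertices are adjacent when they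
agree in one coordinate and differ by exactly 1 in the other. -/
def gridGraph (n : ℕ) : SimpleGraph (Fin n × Fin n) where
  Adj a b := (a.1 = b.1 ∧ (a.2.val + 1 = b.2.val ∨ b.2.val + 1 = a.2.val)) ∨
             (a.2 = b.2 ∧ (a.1.val + 1 = b.1.val ∨ b.1.val + 1 = a.1.val))
  symm := by
    constructor
    rintro a b (⟨h1, h2⟩ | ⟨h1, h2⟩)
    · exact Or.inl ⟨h1.symm, h2.symm⟩
    · exact Or.inr ⟨h1.symm, h2.symm⟩
  loopless := by
    constructor
    rintro a (⟨_, h | h⟩ | ⟨_, h | h⟩) <;> omega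

instance (n : ℕ) : DecidableRel (gridGraph n).Adj := fun a b => by
  unfold gridGraph
  exact inferInstanceAs (Decidable (_ ∨ _))

/-- `d n`: the GF(2)-dimension of the kernel of the Lights Out map of the `n × n` grid. -/
noncomputable def gridNullity (n : ℕ) : ℕ :=
  Module.finrank (ZMod 2) (LinearMap.ker (lightsOut (gridGraph n)))

open Polynomial Module LinearMap SimpleGraph

noncomputable def fibPoly (R : Type*) [CommSemiring R] : ℕ → R[X]
  | 0 => 0
  | 1 => 1
  | k + 2 => X * fibPoly R (k + 1) + fibPoly R k

section FibPoly

variable (R : Type*) [CommSemiring R]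

@[simp]
theorem fibPoly_zero : fibPoly R 0 = 0 := rfl

@[simp]
theorem fibPoly_one : fibPoly R 1 = 1 := rfl

theorem fibPoly_add_two (k : ℕ) : fibPoly R (k + 2) = X * fibPoly R (k + 1) + fibPoly R k := rfl

theorem fibPoly_add_add_one (m j : ℕ) :
    fibPoly R (m + j + 1) = fibPoly R (m + 1) * fibPoly R (j + 1) + fibPoly R m * fibPoly R j := by
  induction j using Nat.twoStepInduction with
  | zero => simp
  | one => simp [fibPoly_add_two]; ring
  | more j ih₀ ih₁ =>
    rw [show m + (j + 2) + 1 = m + j + 1 + 2 by omega, fibPoly_add_two,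
      show m + j + 1 + 1 = m + (j + 1) + 1 by omega, ih₁, ih₀, fibPoly_add_two R (j + 1),
      fibPoly_add_two R j]
    ring

theorem fibPoly_two_mul_add_one (k : ℕ) :
    fibPoly R (2 * k + 1) = fibPoly R (k + 1) ^ 2 + fibPoly R k ^ 2 := by
  rw [two_mul, fibPoly_add_add_one]
  ring

private theorem monic_fibPoly_succ_and_natDegree [Nontrivial R] (k : ℕ) :
    (fibPoly R (k + 1)).Monic ∧ (fibPoly R (k + 1)).natDegree = k := by
  induction k using Nat.twoStepInduction with
  | zero => simp
  | one => simp [fibPoly_add_two]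
  | more k ih₀ ih₁ =>
    have hX : (X * fibPoly R (k + 2)).natDegree = k + 2 := by
      rw [natDegree_X_mul ih₁.1.ne_zero, ih₁.2]
    have hlt : (fibPoly R (k + 1)).natDegree < (X * fibPoly R (k + 2)).natDegree := by
      rw [hX, ih₀.2]; omega
    rw [fibPoly_add_two]
    exact ⟨(monic_X.mul ih₁.1).add_of_left (degree_lt_degree hlt),
      (natDegree_add_eq_left_of_natDegree_lt hlt).trans hX⟩

theorem monic_fibPoly_succ [Nontrivial R] (k : ℕ) : (fibPoly R (k + 1)).Monic :=
  (monic_fibPoly_succ_and_natDegree R k).1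

theorem natDegree_fibPoly_succ [Nontrivial R] (k : ℕ) : (fibPoly R (k + 1)).natDegree = k :=
  (monic_fibPoly_succ_and_natDegree R k).2

variable {R} {M : Type*} [AddCommMonoid M] [Module R M]

theorem aeval_fibPoly_add_two_apply (T : Module.End R M) (k : ℕ) (v : M) :
    aeval T (fibPoly R (k + 2)) v =
      T (aeval T (fibPoly R (k + 1)) v) + aeval T (fibPoly R k) v := by
  rw [fibPoly_add_two, map_add, map_mul, aeval_X, LinearMap.add_apply, Module.End.mul_apply]

theorem eq_aeval_fibPoly_of_recurrence (T : Module.End R M) {s : ℕ → M} {N : ℕ}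
    (h₀ : s 0 = 0) (hs : ∀ k, k + 2 ≤ N → s (k + 2) = T (s (k + 1)) + s k) :
    ∀ k ≤ N, s k = aeval T (fibPoly R k) (s 1) := by
  intro k
  induction k using Nat.twoStepInduction with
  | zero => simp [h₀]
  | one => simp
  | more k ih₀ ih₁ =>
    intro hk
    rw [hs k hk, ih₁ (by omega), ih₀ (by omega), aeval_fibPoly_add_two_apply]

end FibPoly

def IsCyclicVector {R M : Type*} [CommSemiring R] [AddCommMonoid M] [Module R M]
    (B : Module.End R M) (v : M) : Prop :=
  ∀ w : M, ∃ g : R[X], aeval B g v = w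

section CyclicVector

variable {F V : Type*} [Field F] [AddCommGroup V] [Module F V] {B : Module.End F V}

theorem ker_aeval_eq_ker_aeval_gcd [DecidableEq F] {m : F[X]} (hm : aeval B m = 0) (f : F[X]) :
    ker (aeval B f) = ker (aeval B (gcd f m)) := by
  ext w
  simp only [mem_ker]
  constructor
  · intro hw
    obtain ⟨x, y, hxy⟩ := exists_gcd_eq_mul_add_mul f m
    rw [hxy, mul_comm f, mul_comm m, map_add, map_mul, map_mul, hm]
    simp [hw]
  · intro hw
    obtain ⟨c, hc⟩ := gcd_dvd_left f m
    rw [hc, mul_comm, map_mul, Module.End.mul_apply, hw, map_zero]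

namespace IsCyclicVector

variable {v : V} {m : F[X]}

theorem aeval_eq_zero (hv : IsCyclicVector B v) (hmv : aeval B m v = 0) : aeval B m = 0 := by
  ext w
  obtain ⟨g, rfl⟩ := hv w
  rw [← Module.End.mul_apply, ← map_mul, mul_comm, map_mul, Module.End.mul_apply, hmv, map_zero,
    LinearMap.zero_apply]

variable [FiniteDimensional F V]

theorem eq_zero_of_aeval_eq_zero (hv : IsCyclicVector B v) (hm : m.Monic)
    (hmdeg : m.natDegree = finrank F V) (hmv : aeval B m v = 0) {g : F[X]}
    (hg : g.degree < finrank F V) (hgv : aeval B g v = 0) : g = 0 := by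
  set N := finrank F V
  let θ : degreeLT F N →ₗ[F] V :=
    LinearMap.applyₗ v ∘ₗ (aeval B).toLinearMap ∘ₗ (degreeLT F N).subtype
  have hθ : Function.Surjective θ := by
    intro w
    obtain ⟨g, rfl⟩ := hv w
    refine ⟨⟨g %ₘ m, mem_degreeLT.2 ?_⟩, ?_⟩
    · exact (degree_modByMonic_lt g hm).trans_eq
        ((degree_eq_iff_natDegree_eq hm.ne_zero).2 hmdeg)
    · conv_rhs => rw [← modByMonic_add_div g m]
      simp [θ, mul_comm m, Module.End.mul_apply, hmv]
  have hfin : finrank F (degreeLT F N) = N := by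
    rw [(degreeLTEquiv F N).finrank_eq, finrank_fin_fun]
  have hθinj := (LinearMap.injective_iff_surjective_of_finrank_eq_finrank hfin).2 hθ
  simpa using congrArg Subtype.val (@hθinj ⟨g, mem_degreeLT.2 hg⟩ 0 (by simpa [θ] using hgv))

theorem finrank_sub_natDegree_le_finrank_range (hv : IsCyclicVector B v) (hm : m.Monic)
    (hmdeg : m.natDegree = finrank F V) (hmv : aeval B m v = 0) {p : F[X]} (hp : p ≠ 0) :
    finrank F V - p.natDegree ≤ finrank F (range (aeval B p)) := by
  set k := finrank F V - p.natDegree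
  let ψ : degreeLT F k →ₗ[F] range (aeval B p) := (aeval B p).rangeRestrict ∘ₗ
    LinearMap.applyₗ v ∘ₗ (aeval B).toLinearMap ∘ₗ (degreeLT F k).subtype
  have hψ : Function.Injective ψ := by
    rw [← LinearMap.ker_eq_bot, LinearMap.ker_eq_bot']
    rintro ⟨g, hg⟩ hψg
    have hpg : aeval B (p * g) v = 0 := by
      simpa [ψ, Subtype.ext_iff, Module.End.mul_apply] using hψg
    rcases eq_or_ne g 0 with rfl | hg0
    · rfl
    have hdeg : (p * g).degree < finrank F V := by
      rw [degree_eq_natDegree (mul_ne_zero hp hg0), natDegree_mul hp hg0]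
      have : g.natDegree < k := by
        have := mem_degreeLT.1 hg
        rwa [degree_eq_natDegree hg0, Nat.cast_lt] at this
      exact_mod_cast (by omega : p.natDegree + g.natDegree < finrank F V)
    exact absurd (hv.eq_zero_of_aeval_eq_zero hm hmdeg hmv hdeg hpg) (mul_ne_zero hp hg0)
  calc k = finrank F (degreeLT F k) := by rw [(degreeLTEquiv F k).finrank_eq, finrank_fin_fun]
    _ ≤ _ := LinearMap.finrank_le_finrank_of_injective hψ

theorem finrank_ker_aeval_of_dvd (hv : IsCyclicVector B v) (hm : m.Monic)
    (hmdeg : m.natDegree = finrank F V) (hmv : aeval B m v = 0) {d : F[X]} (hd : d ∣ m) :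
    finrank F (ker (aeval B d)) = d.natDegree := by
  obtain ⟨e, rfl⟩ := hd
  have hd0 : d ≠ 0 := left_ne_zero_of_mul hm.ne_zero
  have he0 : e ≠ 0 := right_ne_zero_of_mul hm.ne_zero
  have hdeg : d.natDegree + e.natDegree = finrank F V := by rw [← natDegree_mul hd0 he0, hmdeg]
  have hrange : range (aeval B e) ≤ ker (aeval B d) := by
    rintro _ ⟨w, rfl⟩
    rw [mem_ker, ← Module.End.mul_apply, ← map_mul, hv.aeval_eq_zero hmv, LinearMap.zero_apply]
  have hker := Submodule.finrank_mono hrange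
  have hrank := (aeval B d).finrank_range_add_finrank_ker
  have hd := hv.finrank_sub_natDegree_le_finrank_range hm hmdeg hmv hd0
  have he := hv.finrank_sub_natDegree_le_finrank_range hm hmdeg hmv he0
  omega

theorem finrank_ker_aeval [DecidableEq F] (hv : IsCyclicVector B v) (hm : m.Monic)
    (hmdeg : m.natDegree = finrank F V) (hmv : aeval B m v = 0) (f : F[X]) :
    finrank F (ker (aeval B f)) = (gcd f m).natDegree := by
  rw [ker_aeval_eq_ker_aeval_gcd (hv.aeval_eq_zero hmv),
    hv.finrank_ker_aeval_of_dvd hm hmdeg hmv (gcd_dvd_right f m)]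

end IsCyclicVector

end CyclicVector

theorem associated_gcd_pow_pow {α : Type*} [CommMonoidWithZero α] [GCDMonoid α] (a b : α)
    (k : ℕ) : Associated (gcd (a ^ k) (b ^ k)) (gcd a b ^ k) := by
  obtain ⟨a', b', ha, hb, hu⟩ := extract_gcd a b
  have hu' : IsUnit (gcd (a' ^ k) (b' ^ k)) :=
    gcd_isUnit_iff_isRelPrime.2 (gcd_isUnit_iff_isRelPrime.1 hu).pow
  set g := gcd a b
  rw [ha, hb, mul_pow, mul_pow]
  simpa using (gcd_mul_left' _ _ _).trans ((associated_one_iff_isUnit.2 hu').mul_left (g ^ k))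

theorem natDegree_gcd_pow_pow {K : Type*} [Field K] [DecidableEq K] (p q : K[X]) (k : ℕ) :
    (gcd (p ^ k) (q ^ k)).natDegree = k * (gcd p q).natDegree := by
  rw [natDegree_eq_of_degree_eq (degree_eq_degree_of_associated (associated_gcd_pow_pow p q k)),
    natDegree_pow]

theorem natDegree_gcd_comp_X_add_one_ne_one {K : Type*} [Field K] [DecidableEq K] [CharP K 2]
    (p : K[X]) : (gcd (p.comp (X + 1)) p).natDegree ≠ 1 := by
  intro h
  set g := gcd (p.comp (X + 1)) p
  have hg0 : g ≠ 0 := by rintro hg; simp [hg] at h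
  obtain ⟨a, ha⟩ := exists_root_of_degree_eq_one (degree_eq_iff_natDegree_eq hg0 |>.2 h)
  have hpa : p.IsRoot a := ha.dvd (gcd_dvd_right _ _)
  have hpa' : p.IsRoot (a + 1) := by
    simpa [IsRoot] using ha.dvd (gcd_dvd_left _ _)
  have ha' : g.IsRoot (a + 1) := by
    refine dvd_iff_isRoot.1 (dvd_gcd (dvd_iff_isRoot.2 ?_) (dvd_iff_isRoot.2 hpa'))
    simpa [IsRoot, add_assoc, CharTwo.add_self_eq_zero] using hpa
  have hdvd : (X - C a) * (X - C (a + 1)) ∣ g :=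
    (isCoprime_X_sub_C_of_isUnit_sub (by simp)).mul_dvd (dvd_iff_isRoot.2 ha)
      (dvd_iff_isRoot.2 ha')
  have := natDegree_le_of_dvd hdvd hg0
  rw [natDegree_mul (X_sub_C_ne_zero a) (X_sub_C_ne_zero _), natDegree_X_sub_C,
    natDegree_X_sub_C] at this
  omega

theorem lightsOut_congr {V : Type*} [Fintype V] {G G' : SimpleGraph V} [DecidableRel G.Adj]
    [DecidableRel G'.Adj] (h : G = G') : lightsOut G = lightsOut G' := by
  subst h
  congr!

theorem lightsOut_eq_one_add_toLin'_adjMatrix {V : Type*} [Fintype V] [DecidableEq V]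
    (G : SimpleGraph V) [DecidableRel G.Adj] :
    lightsOut G = 1 + Matrix.toLin' (G.adjMatrix (ZMod 2)) := by
  ext x v
  simp [lightsOut, Matrix.toLin'_apply]

instance {α β : Type*} [DecidableEq α] [DecidableEq β] (G : SimpleGraph α) (H : SimpleGraph β)
    [DecidableRel G.Adj] [DecidableRel H.Adj] : DecidableRel (G □ H).Adj := fun _ _ =>
  inferInstanceAs (Decidable (_ ∨ _))

theorem lightsOut_boxProd_apply {α β : Type*} [Fintype α] [Fintype β] [DecidableEq α]
    [DecidableEq β] (G : SimpleGraph α) (H : SimpleGraph β) [DecidableRel G.Adj]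
    [DecidableRel H.Adj] (x : α × β → ZMod 2) (a : α) (b : β) :
    lightsOut (G □ H) x (a, b) =
      lightsOut H (fun b' => x (a, b')) b + ∑ a' ∈ G.neighborFinset a, x (a', b) := by
  simp only [lightsOut, LinearMap.coe_mk, AddHom.coe_mk]
  rw [neighborFinset_boxProd, Finset.sum_disjUnion, Finset.sum_product, Finset.sum_product]
  simp only [Finset.sum_singleton]
  ring

instance (n : ℕ) : DecidableRel (pathGraph n).Adj := fun _ _ =>
  decidable_of_iff _ pathGraph_adj.symm

/-- The sequence `0, w 0, …, w (n - 1), 0, 0, …`: the shift puts the path neighbours of `i`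
at indices `i` and `i + 2`. -/
def zeroPad {M : Type*} [Zero M] {n : ℕ} (w : Fin n → M) : ℕ → M
  | 0 => 0
  | k + 1 => if h : k < n then w ⟨k, h⟩ else 0

section ZeroPad

variable {M : Type*} {n : ℕ}

@[simp]
theorem zeroPad_zero [Zero M] (w : Fin n → M) : zeroPad w 0 = 0 := rfl

@[simp]
theorem zeroPad_val_add_one [Zero M] (w : Fin n → M) (i : Fin n) : zeroPad w (i + 1) = w i := by
  simp [zeroPad]

theorem zeroPad_of_lt [Zero M] (w : Fin n → M) {k : ℕ} (hk : n < k) : zeroPad w k = 0 := by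
  obtain ⟨k, rfl⟩ := Nat.exists_eq_add_one_of_ne_zero (by omega : k ≠ 0)
  simp [zeroPad, show ¬k < n by omega]

theorem zeroPad_add [AddZeroClass M] (w w' : Fin n → M) (k : ℕ) :
    zeroPad (w + w') k = zeroPad w k + zeroPad w' k := by
  rcases k with _ | k
  · simp
  · by_cases hk : k < n <;> simp [zeroPad, hk]

theorem zeroPad_smul {R : Type*} [Zero M] [SMulZeroClass R M] (c : R) (w : Fin n → M) (k : ℕ) :
    zeroPad (c • w) k = c • zeroPad w k := by
  rcases k with _ | k
  · simp
  · by_cases hk : k < n <;> simp [zeroPad, hk]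

theorem zeroPad_apply {W : Type*} [Zero M] (w : Fin n → W → M) (k : ℕ) (b : W) :
    zeroPad w k b = zeroPad (fun i => w i b) k := by
  rcases k with _ | k
  · simp
  · by_cases hk : k < n <;> simp [zeroPad, hk]

theorem sum_ite_val_add_one_eq [AddCommMonoid M] (w : Fin n → M) (k : ℕ) :
    ∑ j : Fin n, (if (j : ℕ) + 1 = k then w j else 0) = zeroPad w k := by
  rcases k with _ | k
  · simp
  · simp only [Nat.add_right_cancel_iff, zeroPad]
    split_ifs with hk
    · rw [Fintype.sum_eq_single ⟨k, hk⟩ fun j hj => if_neg fun h => hj (Fin.ext h)]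
      simp
    · exact Finset.sum_eq_zero fun j _ => if_neg (by omega)

theorem sum_neighborFinset_pathGraph [AddCommMonoid M] (w : Fin n → M) (i : Fin n) :
    ∑ j ∈ (pathGraph n).neighborFinset i, w j = zeroPad w i + zeroPad w (i + 2) := by
  rw [neighborFinset_eq_filter, Finset.sum_filter, ← sum_ite_val_add_one_eq,
    ← sum_ite_val_add_one_eq, ← Finset.sum_add_distrib]
  refine Finset.sum_congr rfl fun j _ => ?_
  simp only [pathGraph_adj]
  split_ifs <;> first | omega | simp

end ZeroPad

/-- The standard basis vector `e_{k-1}`, read as `0` when `k = 0` or `k > n`. -/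
def shiftedSingle (n k : ℕ) : Fin n → ZMod 2 := fun j => if (j : ℕ) + 1 = k then 1 else 0

theorem shiftedSingle_succ {n k : ℕ} (hk : k < n) :
    shiftedSingle n (k + 1) = Pi.single ⟨k, hk⟩ 1 := by
  ext j
  simp [shiftedSingle, Pi.single_apply, Fin.ext_iff]

theorem toLin'_adjMatrix_pathGraph_shiftedSingle {n k : ℕ} (hk : k < n) :
    Matrix.toLin' ((pathGraph n).adjMatrix (ZMod 2)) (shiftedSingle n (k + 1)) =
      shiftedSingle n k + shiftedSingle n (k + 2) := by
  ext j
  rw [shiftedSingle_succ hk, Matrix.toLin'_apply, Matrix.mulVec_single_one]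
  simp only [Pi.add_apply, shiftedSingle, adjMatrix_apply, pathGraph_adj, Matrix.col_apply]
  split_ifs <;> first | omega | simp

theorem aeval_adjMatrix_pathGraph_fibPoly (n : ℕ) {k : ℕ} (hk : k ≤ n + 1) :
    aeval (Matrix.toLin' ((pathGraph n).adjMatrix (ZMod 2))) (fibPoly (ZMod 2) k)
      (shiftedSingle n 1) = shiftedSingle n k := by
  refine (eq_aeval_fibPoly_of_recurrence _ ?_ (fun k hk => ?_) k hk).symm
  · ext j
    simp [shiftedSingle]
  · rw [toLin'_adjMatrix_pathGraph_shiftedSingle (by omega), add_comm (shiftedSingle n k),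
      add_assoc, ZModModule.add_self, add_zero]

theorem isCyclicVector_adjMatrix_pathGraph (n : ℕ) :
    IsCyclicVector (Matrix.toLin' ((pathGraph n).adjMatrix (ZMod 2))) (shiftedSingle n 1) := by
  intro w
  refine ⟨∑ j : Fin n, C (w j) * fibPoly (ZMod 2) (j + 1), ?_⟩
  conv_rhs => rw [← Finset.univ_sum_single w]
  rw [map_sum, LinearMap.sum_apply]
  refine Finset.sum_congr rfl fun j _ => ?_
  rw [map_mul, aeval_C, Module.End.mul_apply, Module.algebraMap_end_apply,
    aeval_adjMatrix_pathGraph_fibPoly n (by omega), shiftedSingle_succ j.isLt, ← Pi.single_smul',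
    smul_eq_mul, mul_one]

theorem zeroPad_aeval_fibPoly {R M : Type*} [CommSemiring R] [AddCommMonoid M] [Module R M]
    (T : Module.End R M) {m : ℕ} {v : M} (hv : aeval T (fibPoly R (m + 1)) v = 0) {k : ℕ}
    (hk : k ≤ m + 1) :
    zeroPad (fun i : Fin m => aeval T (fibPoly R (i + 1)) v) k = aeval T (fibPoly R k) v := by
  rcases k with _ | k
  · simp
  · rcases Nat.lt_or_eq_of_le (Nat.le_of_succ_le_succ hk) with hk | rfl
    · exact zeroPad_val_add_one _ ⟨k, hk⟩
    · rw [hv, zeroPad_of_lt _ (Nat.lt_succ_self k)]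

section PathGraphBoxProd

variable {W : Type*} [Fintype W] [DecidableEq W] (H : SimpleGraph W) [DecidableRel H.Adj] (m : ℕ)

theorem lightsOut_pathGraph_boxProd_row (x : Fin m × W → ZMod 2) (i : Fin m) :
    (fun b => lightsOut (pathGraph m □ H) x (i, b)) =
      lightsOut H (zeroPad (Function.curry x) (i + 1)) + zeroPad (Function.curry x) i +
        zeroPad (Function.curry x) (i + 2) := by
  funext b
  rw [lightsOut_boxProd_apply, add_assoc, zeroPad_val_add_one, Pi.add_apply, Pi.add_apply,
    zeroPad_apply, zeroPad_apply, ← sum_neighborFinset_pathGraph]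
  rfl

theorem lightsOut_pathGraph_boxProd_eq_zero_iff (x : Fin m × W → ZMod 2) :
    lightsOut (pathGraph m □ H) x = 0 ↔ ∀ k ≤ m + 1, zeroPad (Function.curry x) k =
      aeval (lightsOut H) (fibPoly (ZMod 2) k) (zeroPad (Function.curry x) 1) := by
  constructor
  · intro hx
    refine eq_aeval_fibPoly_of_recurrence _ (zeroPad_zero _) fun k hk => ?_
    have hrow := lightsOut_pathGraph_boxProd_row H m x ⟨k, by omega⟩
    simp only [hx, Pi.zero_apply] at hrow
    rw [eq_neg_of_add_eq_zero_right hrow.symm, ZModModule.neg_eq_self]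
  · intro hs
    ext ⟨i, b⟩
    have hrow := congrFun (lightsOut_pathGraph_boxProd_row H m x i) b
    rw [hrow, hs i (by omega), hs (i + 1) (by omega), hs (i + 2) (by omega),
      aeval_fibPoly_add_two_apply, ZModModule.add_self, Pi.zero_apply, Pi.zero_apply]

noncomputable def kerLightsOutPathGraphBoxProdEquiv :
    ker (lightsOut (pathGraph m □ H)) ≃ₗ[ZMod 2]
      ker (aeval (lightsOut H) (fibPoly (ZMod 2) (m + 1))) where
  toFun x := ⟨zeroPad (Function.curry x.1) 1, by
    rw [mem_ker, ← (lightsOut_pathGraph_boxProd_eq_zero_iff H m x).1 x.2 (m + 1) le_rfl,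
      zeroPad_of_lt _ (Nat.lt_succ_self m)]⟩
  invFun v := ⟨Function.uncurry fun i => aeval (lightsOut H) (fibPoly (ZMod 2) (i + 1)) v, by
    rw [mem_ker, lightsOut_pathGraph_boxProd_eq_zero_iff, Function.curry_uncurry,
      zeroPad_aeval_fibPoly _ v.2 (by omega), fibPoly_one, map_one, Module.End.one_apply]
    exact fun k hk => zeroPad_aeval_fibPoly _ v.2 hk⟩
  map_add' x y := Subtype.ext (zeroPad_add (Function.curry x.1) (Function.curry y.1) 1)
  map_smul' c x := Subtype.ext (zeroPad_smul c (Function.curry x.1) 1)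
  left_inv x := by
    ext ⟨i, b⟩
    have hx := (lightsOut_pathGraph_boxProd_eq_zero_iff H m x).1 x.2 (i + 1) (by omega)
    rw [zeroPad_val_add_one] at hx
    exact congrFun hx.symm b
  right_inv v := by
    ext b
    simp [zeroPad_aeval_fibPoly _ v.2 (by omega : 1 ≤ m + 1)]

end PathGraphBoxProd

theorem gridGraph_eq_boxProd (n : ℕ) : gridGraph n = pathGraph n □ pathGraph n := by
  ext a b
  simp only [gridGraph, boxProd_adj, pathGraph_adj]
  tauto

theorem gridNullity_eq_natDegree_gcd (n : ℕ) :
    gridNullity n =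
      (gcd ((fibPoly (ZMod 2) (n + 1)).comp (X + 1)) (fibPoly (ZMod 2) (n + 1))).natDegree := by
  set A := Matrix.toLin' ((pathGraph n).adjMatrix (ZMod 2))
  have hcomp : aeval (lightsOut (pathGraph n)) (fibPoly (ZMod 2) (n + 1)) =
      aeval A ((fibPoly (ZMod 2) (n + 1)).comp (X + 1)) := by
    simp [aeval_comp, lightsOut_eq_one_add_toLin'_adjMatrix, A, add_comm]
  have hA : aeval A (fibPoly (ZMod 2) (n + 1)) (shiftedSingle n 1) = 0 := by
    rw [aeval_adjMatrix_pathGraph_fibPoly n le_rfl]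
    ext j
    simp [shiftedSingle, j.isLt.ne]
  rw [gridNullity, lightsOut_congr (gridGraph_eq_boxProd n),
    (kerLightsOutPathGraphBoxProdEquiv _ n).finrank_eq, hcomp,
    (isCyclicVector_adjMatrix_pathGraph n).finrank_ker_aeval (monic_fibPoly_succ _ n)
      (by simp [natDegree_fibPoly_succ]) hA]

/-- If `d(n) = 2`, then `n` is odd. -/
theorem odd_of_gridNullity_eq_two (n : ℕ) (h : gridNullity n = 2) : Odd n := by
  refine (Nat.even_or_odd n).resolve_left ?_
  rintro ⟨k, rfl⟩
  set Q := fibPoly (ZMod 2) (k + 1) + fibPoly (ZMod 2) k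
  have hsq : fibPoly (ZMod 2) (k + k + 1) = Q ^ 2 := by
    rw [← two_mul, fibPoly_two_mul_add_one, add_pow_char]
  rw [gridNullity_eq_natDegree_gcd, hsq, pow_comp, natDegree_gcd_pow_pow] at h
  exact natDegree_gcd_comp_X_add_one_ne_one Q (by omega)
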